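/- Let τ = (1+√5)/2 be the golden ratio and let G be the subgroup of the unit group ℍˣ of the real quaternions generated by all products p·q, where p and q range over the 30 pure unit quaternions ±i, ±j, ±k and all cyclic permutations of ½(±1·i ± τ·j ± τ⁻¹·k) (the unit roots of H₃). Then G — the binary icosahedral group 2I, the group of 120 rotors generated by the reflections of the icosahedral group — is isomorphic as a group to SL(2, ℤ/5ℤ). -/

import Mathlib

noncomputable section

/-- The golden ratio `τ = (1+√5)/2`. -/
def τ : ℝ := (1 + Real.sqrt 5) / 2

/-- The quaternion unit `i`. -/
def qi : Quaternion ℝ := ⟨0, 1, 0, 0⟩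
/-- The quaternion unit `j`. -/
def qj : Quaternion ℝ := ⟨0, 0, 1, 0⟩
/-- The quaternion unit `k`. -/
def qk : Quaternion ℝ := ⟨0, 0, 0, 1⟩

/-- The sign set `{1, -1}`. -/
def pm : Set ℝ := {1, -1}

/-- The 30 unit roots of `H₃`: `±i, ±j, ±k` together with all cyclic
permutations of the pure quaternions `½(±1·i ± τ·j ± τ⁻¹·k)`. -/
def rootsH3 : Set (Quaternion ℝ) :=
  {x | (∃ ε ∈ pm, x = ε • qi ∨ x = ε • qj ∨ x = ε • qk) ∨
    (∃ ε₁ ∈ pm, ∃ ε₂ ∈ pm, ∃ ε₃ ∈ pm,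
      (x = (2 : ℝ)⁻¹ • (ε₁ • qi + (ε₂ * τ) • qj + (ε₃ * τ⁻¹) • qk) ∨
       x = (2 : ℝ)⁻¹ • ((ε₃ * τ⁻¹) • qi + ε₁ • qj + (ε₂ * τ) • qk) ∨
       x = (2 : ℝ)⁻¹ • ((ε₂ * τ) • qi + (ε₃ * τ⁻¹) • qj + ε₁ • qk)))}

/-- The set of units of ℍ of the form `p·q` with `p, q` unit roots of `H₃`. -/
def rotorGenH3 : Set (Quaternion ℝ)ˣ :=
  {u | ∃ p ∈ rootsH3, ∃ q ∈ rootsH3, (u : Quaternion ℝ) = p * q}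


/-!
The rotors have coordinates in `½ ℤ[φ]`, where `φ = τ`; they are handled through their doubles in
`ℍ[ℤ[φ]]`, and the ring `ℤ[φ, ½]` carries them both into `ℍ` (`φ ↦ τ`, injectively because `τ` is
irrational) and into `ℍ[𝔽₅] ≅ M₂(𝔽₅)` (`φ ↦ 3`, `½ ↦ 3`). Two rotors reduce to the elementary
matrices `[[1,1],[0,1]]` and `[[1,0],[1,1]]`, which generate `SL₂(𝔽₅)`. Left multiplication by these
two rotors maps the 120 unit icosians into themselves (a finite check), so the monoid they generate
has at most 120 elements, while its image contains `SL₂(𝔽₅)`, which has 120 elements. Hence this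
monoid is the set of the 120 icosians, reduction is injective on it, and since the roots of `H₃` are
icosians it is also the group generated by all rotors.
-/

open scoped Quaternion QuadraticAlgebra MatrixGroups

/-! ### Rotors and generated submonoids -/

theorem isUnit_of_mul_self_eq_neg_one {R : Type*} [Ring R] {a : R} (h : a * a = -1) : IsUnit a :=
  ⟨⟨a, -a, by rw [mul_neg, h, neg_neg], by rw [neg_mul, h, neg_neg]⟩, rfl⟩

theorem mul_mul_mul_swap_eq_one {R : Type*} [Ring R] {p q : R} (hp : p * p = -1)
    (hq : q * q = -1) : p * q * (q * p) = 1 := by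
  rw [mul_assoc, ← mul_assoc q, hq, neg_one_mul, mul_neg, hp, neg_neg]

def rotors {M : Type*} [Monoid M] (s : Set M) : Set Mˣ :=
  {u | ∃ p ∈ s, ∃ q ∈ s, (u : M) = p * q}

theorem rotorGenH3_eq_rotors : rotorGenH3 = rotors rootsH3 := rfl

theorem exists_mem_rotors {M : Type*} [Monoid M] {s : Set M} (hs : ∀ p ∈ s, IsUnit p) {p q : M}
    (hp : p ∈ s) (hq : q ∈ s) : ∃ u ∈ rotors s, (u : M) = p * q :=
  ⟨(hs p hp).unit * (hs q hq).unit, ⟨p, hp, q, hq, rfl⟩, rfl⟩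

theorem image_rotors {M N : Type*} [Monoid M] [Monoid N] (f : M →* N) {s : Set M}
    (hs : ∀ p ∈ s, IsUnit p) : Units.map f '' rotors s = rotors (f '' s) := by
  ext v
  constructor
  · rintro ⟨u, ⟨p, hp, q, hq, hu⟩, rfl⟩
    exact ⟨f p, ⟨p, hp, rfl⟩, f q, ⟨q, hq, rfl⟩, by simp [hu]⟩
  · rintro ⟨_, ⟨p, hp, rfl⟩, _, ⟨q, hq, rfl⟩, hv⟩
    obtain ⟨u, hu, hpq⟩ := exists_mem_rotors hs hp hq
    exact ⟨u, hu, Units.ext (by simp [hpq, hv])⟩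

theorem Submonoid.closure_subset_of_mul_mem {M : Type*} [Monoid M] {T X : Set M} (h₁ : 1 ∈ X)
    (hmul : ∀ g ∈ T, ∀ x ∈ X, g * x ∈ X) : (Submonoid.closure T : Set M) ⊆ X := by
  intro m hm
  suffices ∀ x ∈ X, m * x ∈ X by simpa using this 1 h₁
  induction hm using Submonoid.closure_induction with
  | mem g hg => exact hmul g hg
  | one => simp
  | mul a b _ _ ha hb => exact fun x hx => mul_assoc a b x ▸ ha _ (hb x hx)

theorem Set.image_eq_and_injOn_of_subset_image {α β : Type*} {s : Set α} {t : Set β} {f : α → β}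
    (hs : s.Finite) (hcard : s.ncard ≤ t.ncard) (h : t ⊆ f '' s) : f '' s = t ∧ s.InjOn f := by
  have h₁ := Set.ncard_image_le (f := f) hs
  have h₂ := Set.ncard_le_ncard h (hs.image f)
  exact ⟨(Set.eq_of_subset_of_ncard_le h (by omega) (hs.image f)).symm,
    Set.injOn_of_ncard_image_eq (by omega) hs⟩

/-! ### Quaternions over a commutative ring -/

namespace Quaternion

variable {R S : Type*} [CommRing R] [CommRing S]

instance [DecidableEq R] : DecidableEq ℍ[R] :=
  fun x y => decidable_of_iff (x.re = y.re ∧ x.imI = y.imI ∧ x.imJ = y.imJ ∧ x.imK = y.imK)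
    QuaternionAlgebra.ext_iff.symm

/-- The quaternion `a + b i + c j + d k`. The anonymous constructor would produce a term of type
`ℍ[R,-1,0,-1]`, which `simp` does not identify with `ℍ[R]`. -/
@[simps]
def mk (a b c d : R) : ℍ[R] := ⟨a, b, c, d⟩

@[simps]
def map (f : R →+* S) : ℍ[R] →+* ℍ[S] where
  toFun q := mk (f q.re) (f q.imI) (f q.imJ) (f q.imK)
  map_one' := by ext <;> simp
  map_zero' := by ext <;> simp
  map_add' x y := by ext <;> simp
  map_mul' x y := by ext <;> simp

@[simp]
theorem map_mk (f : R →+* S) (a b c d : R) : map f (mk a b c d) = mk (f a) (f b) (f c) (f d) :=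
  rfl

theorem map_map {T : Type*} [CommRing T] (f : R →+* S) (g : S →+* T) (x : ℍ[R]) :
    map g (map f x) = map (g.comp f) x := rfl

theorem map_coe (f : R →+* S) (r : R) : map f r = (f r : ℍ[S]) := by
  ext <;> simp

theorem map_injective {f : R →+* S} (hf : Function.Injective f) :
    Function.Injective (map f) := fun x y h => by
  ext
  · exact hf congr(($h).re)
  · exact hf congr(($h).imI)
  · exact hf congr(($h).imJ)
  · exact hf congr(($h).imK)

theorem ofNat_eq_coe (n : ℕ) [n.AtLeastTwo] :
    (OfNat.ofNat n : ℍ[R]) = ((OfNat.ofNat n : R) : ℍ[R]) :=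
  QuaternionAlgebra.coe_ofNat.symm

end Quaternion

/-! ### Generation of `SL₂` by elementary matrices -/

namespace Matrix

theorem transvection_zero_one {R : Type*} [CommRing R] (c : R) :
    transvection (0 : Fin 2) 1 c = !![1, c; 0, 1] := by
  ext i j; fin_cases i <;> fin_cases j <;> simp [transvection]

theorem transvection_one_zero {R : Type*} [CommRing R] (c : R) :
    transvection (1 : Fin 2) 0 c = !![1, 0; c, 1] := by
  ext i j; fin_cases i <;> fin_cases j <;> simp [transvection]

theorem transvection_one_pow {n R : Type*} [Fintype n] [DecidableEq n] [CommRing R] {i j : n}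
    (hij : i ≠ j) (k : ℕ) : transvection i j (1 : R) ^ k = transvection i j (k : R) := by
  induction k with
  | zero => simp
  | succ k ih => rw [pow_succ, ih, transvection_mul_transvection_same (h := hij), Nat.cast_succ]

theorem diagonal_eq_transvection_mul {F : Type*} [Field F] (D : Fin 2 → F) (hD : D 0 * D 1 = 1) :
    diagonal D = transvection 0 1 (D 0) * transvection 1 0 (-D 1) * transvection 0 1 (D 0) *
      (transvection 0 1 (-1) * transvection 1 0 1 * transvection 0 1 (-1)) := by
  simp only [transvection_zero_one, transvection_one_zero, mul_fin_two]
  ext i j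
  fin_cases i <;> fin_cases j <;> simp [diagonal, hD, mul_comm (D 1)]

theorem SpecialLinearGroup.coe_mem_closure_transvections {F : Type*} [Field F]
    (M : SL(2, F)) : (M : Matrix (Fin 2) (Fin 2) F) ∈ Submonoid.closure
      (Set.range (Matrix.transvection (0 : Fin 2) 1) ∪ Set.range (Matrix.transvection 1 0)) := by
  set T : Submonoid (Matrix (Fin 2) (Fin 2) F) := Submonoid.closure
    (Set.range (Matrix.transvection (0 : Fin 2) 1) ∪ Set.range (Matrix.transvection (1 : Fin 2) 0))
  have h01 (c : F) : Matrix.transvection 0 1 c ∈ T := Submonoid.subset_closure (.inl ⟨c, rfl⟩)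
  have h10 (c : F) : Matrix.transvection 1 0 c ∈ T := Submonoid.subset_closure (.inr ⟨c, rfl⟩)
  refine diagonal_transvection_induction (· ∈ T) (M : Matrix (Fin 2) (Fin 2) F) (fun D hD => ?_)
    (fun ⟨i, j, hij, c⟩ => ?_) (fun _ _ => mul_mem)
  · rw [M.2, det_diagonal, Fin.prod_univ_two] at hD
    rw [diagonal_eq_transvection_mul D hD]
    exact mul_mem (mul_mem (mul_mem (h01 _) (h10 _)) (h01 _))
      (mul_mem (mul_mem (h01 _) (h10 _)) (h01 _))
  · rw [TransvectionStruct.toMatrix_mk]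
    fin_cases i <;> fin_cases j
    exacts [absurd rfl hij, h01 c, h10 c, absurd rfl hij]

theorem SpecialLinearGroup.coe_mem_closure_transvection_one {p : ℕ} [Fact p.Prime]
    (M : SL(2, ZMod p)) : (M : Matrix (Fin 2) (Fin 2) (ZMod p)) ∈
      Submonoid.closure {Matrix.transvection (0 : Fin 2) 1 1, Matrix.transvection 1 0 1} := by
  refine Submonoid.closure_le.mpr ?_ (coe_mem_closure_transvections M)
  rintro _ (⟨c, rfl⟩ | ⟨c, rfl⟩) <;>
    rw [← ZMod.natCast_zmod_val c, ← transvection_one_pow (by decide)]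
  · exact pow_mem (Submonoid.subset_closure (.inl rfl)) _
  · exact pow_mem (Submonoid.subset_closure (.inr rfl)) _

end Matrix

set_option maxRecDepth 10000 in
theorem card_SL_two_zmod_five : Nat.card SL(2, ZMod 5) = 120 := by
  rw [Nat.card_eq_fintype_card]
  decide

theorem ncard_range_coe_SL_two_zmod_five :
    (Set.range ((↑) : SL(2, ZMod 5) → Matrix (Fin 2) (Fin 2) (ZMod 5))).ncard = 120 :=
  (Set.ncard_range_of_injective Subtype.coe_injective).trans card_SL_two_zmod_five

/-! ### The rings `ℤ[φ]` and `ℤ[φ, ½]` -/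

local notation "ℤ[φ]" => QuadraticAlgebra ℤ 1 1

theorem tau_eq_goldenRatio : τ = Real.goldenRatio := rfl

theorem tau_inv : τ⁻¹ = τ - 1 := by
  rw [tau_eq_goldenRatio, Real.inv_goldenRatio, ← Real.one_sub_goldenRatio]
  ring

def goldenEmbedding : ℤ[φ] →+* ℝ :=
  (QuadraticAlgebra.lift
    ⟨τ, by simp [tau_eq_goldenRatio, ← sq, Real.goldenRatio_sq, add_comm]⟩).toRingHom

def goldenReduction : ℤ[φ] →+* ZMod 5 := (QuadraticAlgebra.lift ⟨3, by decide⟩).toRingHom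

theorem goldenEmbedding_apply (x : ℤ[φ]) : goldenEmbedding x = x.re + x.im * τ := by
  simp [goldenEmbedding]

theorem goldenEmbedding_injective : Function.Injective goldenEmbedding := by
  intro x y h
  simp only [goldenEmbedding_apply] at h
  have him : x.im = y.im := by
    by_contra hne
    have hne' : ((x.im - y.im : ℤ) : ℝ) ≠ 0 := by exact_mod_cast sub_ne_zero.mpr hne
    apply Real.goldenRatio_irrational
    refine ⟨(y.re - x.re : ℤ) / (x.im - y.im : ℤ), ?_⟩
    push_cast at hne' ⊢
    rw [← tau_eq_goldenRatio]
    field_simp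
    linarith
  ext
  · rw [him] at h; exact_mod_cast (add_right_cancel h)
  · exact him

local notation "ℤ[φ,½]" => Localization.Away (2 : ℤ[φ])

local notation "½" => IsLocalization.Away.invSelf (S := ℤ[φ,½]) (2 : ℤ[φ])

def realEmbedding : ℤ[φ,½] →+* ℝ :=
  IsLocalization.Away.lift 2 (g := goldenEmbedding)
    (by rw [map_ofNat]; exact isUnit_iff_ne_zero.mpr two_ne_zero)

def modFive : ℤ[φ,½] →+* ZMod 5 :=
  IsLocalization.Away.lift 2 (g := goldenReduction) (by decide)

theorem realEmbedding_injective : Function.Injective realEmbedding :=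
  (IsLocalization.lift_injective_iff _).mpr fun x y =>
    ⟨fun h => by simpa [realEmbedding] using congrArg realEmbedding h,
     fun h => by rw [goldenEmbedding_injective h]⟩

theorem two_mul_half : (2 : ℤ[φ,½]) * ½ = 1 := by
  rw [← map_ofNat (algebraMap ℤ[φ] ℤ[φ,½]) 2]
  exact IsLocalization.Away.mul_invSelf 2

theorem realEmbedding_half : realEmbedding ½ = 2⁻¹ := by
  refine eq_inv_of_mul_eq_one_right ?_
  have h := congrArg realEmbedding two_mul_half
  rwa [map_mul, map_one, map_ofNat] at h

theorem modFive_half : modFive ½ = 3 := by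
  have h := congrArg modFive two_mul_half
  rw [map_mul, map_one, map_ofNat] at h
  have inv_two : ∀ m : ZMod 5, 2 * m = 1 → m = 3 := by decide
  exact inv_two _ h

def halve (x : ℍ[ℤ[φ]]) : ℍ[ℤ[φ,½]] := (½ : ℍ[ℤ[φ,½]]) * Quaternion.map (algebraMap ℤ[φ] ℤ[φ,½]) x

theorem halve_mul_halve {x y z : ℍ[ℤ[φ]]} (h : x * y = 2 * z) : halve x * halve y = halve z := by
  have h2 : ((½ : ℤ[φ,½]) : ℍ[ℤ[φ,½]]) * ½ * 2 = ½ := by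
    rw [mul_assoc, Quaternion.ofNat_eq_coe, ← Quaternion.coe_mul, ← Quaternion.coe_mul,
      mul_comm ½ 2, two_mul_half, mul_one]
  rw [halve, halve, halve, mul_assoc, ← mul_assoc (Quaternion.map _ x), ← Quaternion.coe_commutes,
    mul_assoc, ← mul_assoc, ← map_mul, h, map_mul, map_ofNat, ← mul_assoc, h2]

theorem halve_two : halve 2 = 1 := by
  rw [halve, map_ofNat, Quaternion.ofNat_eq_coe, ← Quaternion.coe_mul, mul_comm, two_mul_half,
    Quaternion.coe_one]

theorem halve_neg (x : ℍ[ℤ[φ]]) : halve (-x) = -halve x := by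
  rw [halve, halve, map_neg, mul_neg]

theorem map_realEmbedding_halve (x : ℍ[ℤ[φ]]) :
    Quaternion.map realEmbedding (halve x) = (2 : ℝ)⁻¹ • Quaternion.map goldenEmbedding x := by
  rw [halve, map_mul, Quaternion.map_coe, realEmbedding_half, Quaternion.map_map, realEmbedding,
    IsLocalization.Away.lift_comp, Quaternion.coe_mul_eq_smul]

theorem map_modFive_halve (x : ℍ[ℤ[φ]]) :
    Quaternion.map modFive (halve x) = (3 : ZMod 5) • Quaternion.map goldenReduction x := by
  rw [halve, map_mul, Quaternion.map_coe, modFive_half, Quaternion.map_map, modFive,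
    IsLocalization.Away.lift_comp, Quaternion.coe_mul_eq_smul]

/-! ### Roots of `H₃` and icosians -/

/-- Twice the roots of `H₃`, with `t` in place of `τ` and `t - 1` in place of `τ⁻¹`. -/
def doubledRootsH3 {R : Type*} [CommRing R] (t : R) : List ℍ[R] :=
  let signs : List R := [1, -1]
  (signs.flatMap fun ε => [.mk 0 (2 * ε) 0 0, .mk 0 0 (2 * ε) 0, .mk 0 0 0 (2 * ε)]) ++
    signs.flatMap fun ε₁ => signs.flatMap fun ε₂ => signs.flatMap fun ε₃ =>
      [.mk 0 ε₁ (ε₂ * t) (ε₃ * (t - 1)), .mk 0 (ε₃ * (t - 1)) ε₁ (ε₂ * t),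
        .mk 0 (ε₂ * t) (ε₃ * (t - 1)) ε₁]

theorem map_doubledRootsH3 {R S : Type*} [CommRing R] [CommRing S] (f : R →+* S) (t : R) :
    (doubledRootsH3 t).map (Quaternion.map f) = doubledRootsH3 (f t) := by
  simp only [doubledRootsH3, List.flatMap_cons, List.flatMap_nil, List.map_append, List.map_cons,
    List.map_nil, List.append_nil, Quaternion.map_mk, map_zero, map_mul, map_ofNat, map_sub,
    map_neg, map_one]

theorem rootsH3_eq : rootsH3 = {x | ∃ y ∈ doubledRootsH3 τ, x = (2 : ℝ)⁻¹ • y} := by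
  have hi : qi = .mk 0 1 0 0 := rfl
  have hj : qj = .mk 0 0 1 0 := rfl
  have hk : qk = .mk 0 0 0 1 := rfl
  ext x
  simp only [rootsH3, pm, doubledRootsH3, hi, hj, hk, tau_inv, Set.mem_ofPred_eq,
    Set.mem_insert_iff, Set.mem_singleton_iff, List.mem_append, List.mem_flatMap, List.mem_cons,
    List.not_mem_nil, or_false, or_and_right, exists_or, exists_eq_left]
  simp [Quaternion.ext_iff]

/-- Twice the 120 unit icosians: `±1`, `±i`, `±j`, `±k`, `½(±1 ± i ± j ± k)` and the even
permutations of the coordinates of `½(±i ± φ j ± φ⁻¹ k)`. -/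
def doubledIcosians : List ℍ[ℤ[φ]] :=
  let signs : List ℤ[φ] := [1, -1]
  let evenPerms (q : ℍ[ℤ[φ]]) : List ℍ[ℤ[φ]] :=
    [q, .mk q.re q.imK q.imI q.imJ, .mk q.re q.imJ q.imK q.imI].flatMap fun w =>
      [w, .mk w.imI w.re w.imK w.imJ, .mk w.imJ w.imK w.re w.imI, .mk w.imK w.imJ w.imI w.re]
  (signs.flatMap fun ε =>
      [.mk (2 * ε) 0 0 0, .mk 0 (2 * ε) 0 0, .mk 0 0 (2 * ε) 0, .mk 0 0 0 (2 * ε)]) ++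
    (signs.flatMap fun a => signs.flatMap fun b => signs.flatMap fun c => signs.map fun d =>
      .mk a b c d) ++
    (signs.flatMap fun a => signs.flatMap fun b => signs.flatMap fun c =>
      evenPerms (.mk 0 a (b * ω) (c * (ω - 1))))

def icosianU : ℍ[ℤ[φ]] := .mk (ω - 1) (-1) 0 ω

def icosianL : ℍ[ℤ[φ]] := .mk (ω - 1) 1 0 ω

section Computations

set_option maxRecDepth 10000

theorem length_doubledIcosians : doubledIcosians.length = 120 := by decide

theorem doubledRootsH3_subset_doubledIcosians :
    ∀ p ∈ doubledRootsH3 (ω : ℤ[φ]), p ∈ doubledIcosians := by decide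

theorem doubledRootsH3_mul_self : ∀ p ∈ doubledRootsH3 (ω : ℤ[φ]), p * p = 2 * -2 := by decide

theorem mul_mem_doubledIcosians :
    ∀ g ∈ [icosianU, icosianL], ∀ x ∈ doubledIcosians, ∃ z ∈ doubledIcosians, g * x = 2 * z := by
  decide

theorem two_mul_icosianU : (.mk 0 0 2 0 : ℍ[ℤ[φ]]) * .mk 0 (-ω) (1 - ω) (-1) = 2 * icosianU := by
  decide

theorem two_mul_icosianL : (.mk 0 0 2 0 : ℍ[ℤ[φ]]) * .mk 0 (-ω) (1 - ω) 1 = 2 * icosianL := by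
  decide

end Computations

/-! ### Reduction modulo 5 -/

def splittingModFive :
    QuaternionAlgebra.Basis (Matrix (Fin 2) (Fin 2) (ZMod 5)) (-1 : ZMod 5) 0 (-1) where
  i := !![0, 4; 1, 0]
  j := !![2, 0; 0, 3]
  k := !![0, 2; 2, 0]
  i_mul_i := by decide
  j_mul_j := by decide
  i_mul_j := by decide
  j_mul_i := by decide

def reduceModFive : ℍ[ℤ[φ,½]] →+* Matrix (Fin 2) (Fin 2) (ZMod 5) :=
  (splittingModFive.liftHom.toRingHom : ℍ[ZMod 5] →+* Matrix (Fin 2) (Fin 2) (ZMod 5)).comp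
    (Quaternion.map modFive)

theorem reduceModFive_halve (x : ℍ[ℤ[φ]]) : reduceModFive (halve x) =
    (3 : ZMod 5) • splittingModFive.liftHom (Quaternion.map goldenReduction x) :=
  (congrArg splittingModFive.liftHom (map_modFive_halve x)).trans (map_smul _ _ _)

theorem reduceModFive_halve_icosianU :
    reduceModFive (halve icosianU) = Matrix.transvection 0 1 1 := by
  rw [reduceModFive_halve]
  decide

theorem reduceModFive_halve_icosianL :
    reduceModFive (halve icosianL) = Matrix.transvection 1 0 1 := by
  rw [reduceModFive_halve]
  decide

def icosians : Set ℍ[ℤ[φ,½]] := halve '' {x | x ∈ doubledIcosians}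

def icosianMonoid : Submonoid ℍ[ℤ[φ,½]] := Submonoid.closure {halve icosianU, halve icosianL}

theorem icosians_finite : icosians.Finite := (List.finite_toSet _).image _

theorem ncard_icosians_le : icosians.ncard ≤ 120 := by
  calc icosians.ncard ≤ {x | x ∈ doubledIcosians}.ncard := Set.ncard_image_le (List.finite_toSet _)
    _ = doubledIcosians.toFinset.card := by rw [← List.coe_toFinset, Set.ncard_coe_finset]
    _ ≤ 120 := (List.toFinset_card_le _).trans length_doubledIcosians.le

theorem icosianMonoid_subset_icosians : (icosianMonoid : Set ℍ[ℤ[φ,½]]) ⊆ icosians := by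
  refine Submonoid.closure_subset_of_mul_mem ⟨2, by decide, halve_two⟩ ?_
  rintro _ hg _ ⟨x, hx, rfl⟩
  have key (g : ℍ[ℤ[φ]]) (hg : g ∈ [icosianU, icosianL]) : halve g * halve x ∈ icosians := by
    obtain ⟨z, hz, h⟩ := mul_mem_doubledIcosians g hg x hx
    exact ⟨z, hz, (halve_mul_halve h).symm⟩
  rcases hg with rfl | rfl
  exacts [key _ (by simp), key _ (by simp)]

theorem range_coe_SL_subset_image_icosianMonoid :
    Set.range ((↑) : SL(2, ZMod 5) → Matrix (Fin 2) (Fin 2) (ZMod 5)) ⊆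
      reduceModFive '' icosianMonoid := by
  rintro _ ⟨M, rfl⟩
  have : Fact (Nat.Prime 5) := ⟨by norm_num⟩
  have := Matrix.SpecialLinearGroup.coe_mem_closure_transvection_one M
  rwa [← reduceModFive_halve_icosianU, ← reduceModFive_halve_icosianL, ← Set.image_pair,
    ← MonoidHom.coe_coe, ← MonoidHom.map_mclosure] at this

theorem image_reduceModFive_icosianMonoid_and_injOn :
    reduceModFive '' icosianMonoid =
        Set.range ((↑) : SL(2, ZMod 5) → Matrix (Fin 2) (Fin 2) (ZMod 5)) ∧
      Set.InjOn reduceModFive icosianMonoid := by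
  refine Set.image_eq_and_injOn_of_subset_image
    (icosians_finite.subset icosianMonoid_subset_icosians) ?_
    range_coe_SL_subset_image_icosianMonoid
  rw [ncard_range_coe_SL_two_zmod_five]
  exact (Set.ncard_le_ncard icosianMonoid_subset_icosians icosians_finite).trans ncard_icosians_le

theorem coe_icosianMonoid : (icosianMonoid : Set ℍ[ℤ[φ,½]]) = icosians := by
  obtain ⟨himage, hinj⟩ := image_reduceModFive_icosianMonoid_and_injOn
  refine Set.eq_of_subset_of_ncard_le icosianMonoid_subset_icosians ?_ icosians_finite
  rw [← hinj.ncard_image, himage, ncard_range_coe_SL_two_zmod_five]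
  exact ncard_icosians_le

/-! ### The group generated by the rotors -/

def icosianRoots : Set ℍ[ℤ[φ,½]] := halve '' {p | p ∈ doubledRootsH3 ω}

theorem mul_self_of_mem_icosianRoots {a : ℍ[ℤ[φ,½]]} (ha : a ∈ icosianRoots) : a * a = -1 := by
  obtain ⟨p, hp, rfl⟩ := ha
  rw [halve_mul_halve (doubledRootsH3_mul_self p hp), halve_neg, halve_two]

theorem isUnit_of_mem_icosianRoots {a : ℍ[ℤ[φ,½]]} (ha : a ∈ icosianRoots) : IsUnit a :=
  isUnit_of_mul_self_eq_neg_one (mul_self_of_mem_icosianRoots ha)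

theorem icosianRoots_subset_icosianMonoid : icosianRoots ⊆ icosianMonoid := by
  rw [coe_icosianMonoid]
  exact Set.image_mono doubledRootsH3_subset_doubledIcosians

theorem image_val_closure_rotors_subset :
    Units.val '' (Subgroup.closure (rotors icosianRoots) : Set ℍ[ℤ[φ,½]]ˣ) ⊆ icosianMonoid := by
  rintro _ ⟨u, hu, rfl⟩
  induction hu using Subgroup.closure_induction'' with
  | mem u hu =>
    obtain ⟨p, hp, q, hq, hu⟩ := hu
    rw [hu]
    exact mul_mem (icosianRoots_subset_icosianMonoid hp) (icosianRoots_subset_icosianMonoid hq)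
  | inv_mem u hu =>
    obtain ⟨p, hp, q, hq, hu⟩ := hu
    rw [Units.inv_eq_of_mul_eq_one_right (hu ▸ mul_mul_mul_swap_eq_one
      (mul_self_of_mem_icosianRoots hp) (mul_self_of_mem_icosianRoots hq))]
    exact mul_mem (icosianRoots_subset_icosianMonoid hq) (icosianRoots_subset_icosianMonoid hp)
  | one => exact one_mem _
  | mul u v _ _ hu hv => exact mul_mem hu hv

theorem icosianMonoid_le_map_closure_rotors :
    icosianMonoid ≤ (Subgroup.closure (rotors icosianRoots)).toSubmonoid.map (Units.coeHom _) := by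
  have hgen (x p q : ℍ[ℤ[φ]]) (hp : p ∈ doubledRootsH3 (ω : ℤ[φ]))
      (hq : q ∈ doubledRootsH3 (ω : ℤ[φ])) (h : p * q = 2 * x) :
      halve x ∈ (Subgroup.closure (rotors icosianRoots)).toSubmonoid.map (Units.coeHom _) := by
    obtain ⟨u, hu, hpq⟩ :=
      exists_mem_rotors (fun _ => isUnit_of_mem_icosianRoots) ⟨p, hp, rfl⟩ ⟨q, hq, rfl⟩
    exact ⟨u, Subgroup.subset_closure hu, by rw [Units.coeHom_apply, hpq, halve_mul_halve h]⟩
  exact Submonoid.closure_le.mpr (Set.pair_subset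
    (hgen _ _ _ (by decide) (by decide) two_mul_icosianU)
    (hgen _ _ _ (by decide) (by decide) two_mul_icosianL))

theorem image_val_closure_rotors :
    Units.val '' (Subgroup.closure (rotors icosianRoots) : Set ℍ[ℤ[φ,½]]ˣ) = icosianMonoid := by
  refine image_val_closure_rotors_subset.antisymm fun x hx => ?_
  obtain ⟨u, hu, rfl⟩ := icosianMonoid_le_map_closure_rotors hx
  exact ⟨u, hu, rfl⟩

theorem reduceModFive_mem_range_coe {u : ℍ[ℤ[φ,½]]ˣ}
    (hu : u ∈ Subgroup.closure (rotors icosianRoots)) :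
    reduceModFive u ∈ Set.range ((↑) : SL(2, ZMod 5) → Matrix (Fin 2) (Fin 2) (ZMod 5)) := by
  rw [← image_reduceModFive_icosianMonoid_and_injOn.1, ← image_val_closure_rotors]
  exact ⟨u, ⟨u, hu, rfl⟩, rfl⟩

def closureRotorsToSL : Subgroup.closure (rotors icosianRoots) →* SL(2, ZMod 5) where
  toFun u := ⟨reduceModFive (u : ℍ[ℤ[φ,½]]ˣ), by
    obtain ⟨M, hM⟩ := reduceModFive_mem_range_coe u.2
    rw [← hM]
    exact M.2⟩
  map_one' := Subtype.ext (map_one reduceModFive)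
  map_mul' u v := Subtype.ext (map_mul reduceModFive _ _)

theorem closureRotorsToSL_bijective : Function.Bijective closureRotorsToSL := by
  obtain ⟨himage, hinj⟩ := image_reduceModFive_icosianMonoid_and_injOn
  have hmem (u : Subgroup.closure (rotors icosianRoots)) :
      ((u : ℍ[ℤ[φ,½]]ˣ) : ℍ[ℤ[φ,½]]) ∈ (icosianMonoid : Set ℍ[ℤ[φ,½]]) := by
    rw [← image_val_closure_rotors]
    exact ⟨u, u.2, rfl⟩
  refine ⟨fun u v h => ?_, fun M => ?_⟩
  · exact Subtype.ext (Units.ext (hinj (hmem u) (hmem v) (congrArg Subtype.val h)))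
  · obtain ⟨x, hx, hxM⟩ : (M : Matrix (Fin 2) (Fin 2) (ZMod 5)) ∈ reduceModFive '' icosianMonoid :=
      himage ▸ ⟨M, rfl⟩
    rw [← image_val_closure_rotors] at hx
    obtain ⟨u, hu, rfl⟩ := hx
    exact ⟨⟨u, hu⟩, Subtype.ext hxM⟩

def realUnits : ℍ[ℤ[φ,½]]ˣ →* ℍ[ℝ]ˣ := Units.map (Quaternion.map realEmbedding : ℍ[ℤ[φ,½]] →* ℍ[ℝ])

theorem realUnits_injective : Function.Injective realUnits := fun _ _ h =>
  Units.ext (Quaternion.map_injective realEmbedding_injective congr(($h : ℍ[ℝ])))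

theorem image_map_realEmbedding_icosianRoots :
    Quaternion.map realEmbedding '' icosianRoots = rootsH3 := by
  have hτ : goldenEmbedding ω = τ := by simp [goldenEmbedding_apply]
  rw [rootsH3_eq, ← hτ, ← map_doubledRootsH3, icosianRoots, Set.image_image]
  ext x
  simp only [Set.mem_image, Set.mem_ofPred_eq, List.mem_map, map_realEmbedding_halve, eq_comm]
  exact ⟨fun ⟨p, hp, h⟩ => ⟨_, ⟨p, hp, rfl⟩, h⟩, fun ⟨_, ⟨p, hp, rfl⟩, h⟩ => ⟨p, hp, h⟩⟩

theorem closure_rotorGenH3_eq :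
    Subgroup.closure rotorGenH3 = (Subgroup.closure (rotors icosianRoots)).map realUnits := by
  rw [MonoidHom.map_closure, realUnits,
    image_rotors _ fun _ => isUnit_of_mem_icosianRoots, MonoidHom.coe_coe,
    image_map_realEmbedding_icosianRoots, rotorGenH3_eq_rotors]

/-- The subgroup of `ℍˣ` generated by all products of pairs of the 30 unit
roots of `H₃` — the binary icosahedral group `2I`, the group of 120 rotors
generated by the reflections of the icosahedral group — has 120 elements and
is isomorphic as a group to `SL(2, ℤ/5ℤ)`. -/
theorem binary_icosahedral_iso_SL2_F5 :
    Nat.card (Subgroup.closure rotorGenH3 : Subgroup (Quaternion ℝ)ˣ) = 120 ∧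
    Nonempty ((Subgroup.closure rotorGenH3 : Subgroup (Quaternion ℝ)ˣ)
      ≃* Matrix.SpecialLinearGroup (Fin 2) (ZMod 5)) := by
  let e : Subgroup.closure rotorGenH3 ≃* SL(2, ZMod 5) :=
    (MulEquiv.subgroupCongr closure_rotorGenH3_eq).trans
      ((Subgroup.equivMapOfInjective _ realUnits realUnits_injective).symm.trans
        (MulEquiv.ofBijective _ closureRotorsToSL_bijective))
  exact ⟨(Nat.card_congr e.toEquiv).trans card_SL_two_zmod_five, ⟨e⟩⟩
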